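/- arXiv:2003.07201 — 6 statements merged into one kernel-verified Lean document; each statement's English description precedes it below -/
import Mathlib

section
/- Let p be a mixing density and for each n ∈ ℕ define f_n(u) = ∫_0^∞ (ξ/(2π))^{n/2} e^{-uξ/2} p(ξ) dξ. Then for every n ∈ ℕ and every u ≥ 0, ∫_ℝ f_{n+1}(u + t²) dt = f_n(u); that is, the family of density generators defined by a mixing density is consistent under marginalization of one coordinate. -/
open MeasureTheory Real
open scoped ENNReal

/-- Auxiliary bound: `x ^ m ≤ m! * exp x` for `x ≥ 0`. -/
lemma aux_pow_le_factorial_mul_exp {x : ℝ} (hx : 0 ≤ x) (m : ℕ) :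
    x ^ m ≤ (m.factorial : ℝ) * Real.exp x := by
  have h1 : x ^ m / (m.factorial : ℝ) ≤ Real.exp x := by
    have := Real.sum_le_exp_of_nonneg hx (m + 1)
    refine le_trans ?_ this
    have : x ^ m / (m.factorial : ℝ) =
        ∑ i ∈ Finset.range (m+1), if i = m then x ^ i / (i.factorial : ℝ) else 0 := by
      simp
    rw [this]
    apply Finset.sum_le_sum
    intro i hi
    by_cases h : i = m
    · simp [h]
    · simp [h]
      positivity
  have hfac : (0:ℝ) < (m.factorial : ℝ) := by positivity
  calc x ^ m = (m.factorial : ℝ) * (x ^ m / (m.factorial : ℝ)) := by field_simp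
    _ ≤ (m.factorial : ℝ) * Real.exp x := by
        exact mul_le_mul_of_nonneg_left h1 hfac.le

/-- Auxiliary bound: `(ξ/(2π))^a * exp (-v*ξ/2) ≤ C` uniformly in `ξ > 0` for `v > 0`. -/
lemma aux_bounded (a : ℝ) (ha : 0 ≤ a) {v : ℝ} (hv : 0 < v) :
    ∃ C : ℝ, 0 ≤ C ∧ ∀ ξ : ℝ, 0 < ξ →
      (ξ / (2 * π)) ^ a * Real.exp (-v * ξ / 2) ≤ C := by
  obtain ⟨m, hm⟩ := exists_nat_ge a
  refine ⟨(m.factorial : ℝ) * (1 / (v * π)) ^ m + 1, by positivity, fun ξ hξ => ?_⟩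
  have hπ := Real.pi_pos
  have h2π : (0:ℝ) < 2 * π := by positivity
  have hbase : 0 < ξ / (2 * π) := by positivity
  have hexp : 0 < Real.exp (-v * ξ / 2) := Real.exp_pos _
  have hC0 : (0:ℝ) ≤ (m.factorial : ℝ) * (1 / (v * π)) ^ m := by positivity
  by_cases hle : ξ / (2 * π) ≤ 1
  · have h1 : (ξ / (2 * π)) ^ a ≤ 1 := Real.rpow_le_one hbase.le hle ha
    have h2 : Real.exp (-v * ξ / 2) ≤ 1 := Real.exp_le_one_iff.mpr (by nlinarith)
    nlinarith [Real.rpow_nonneg hbase.le a]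
  · push_neg at hle
    have h1 : (ξ / (2 * π)) ^ a ≤ (ξ / (2 * π)) ^ (m : ℝ) :=
      Real.rpow_le_rpow_of_exponent_le hle.le hm
    rw [Real.rpow_natCast] at h1
    have hb := aux_pow_le_factorial_mul_exp (x := v * ξ / 2) (by positivity) m
    have hrw2 : (ξ / (2 * π)) ^ m = (v * ξ / 2) ^ m * (1 / (v * π)) ^ m := by
      rw [← mul_pow]
      congr 1
      field_simp
    have hmul : Real.exp (v * ξ / 2) * Real.exp (-v * ξ / 2) = 1 := by
      rw [← Real.exp_add]
      rw [show v * ξ / 2 + -v * ξ / 2 = 0 by ring, Real.exp_zero]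
    have key : (ξ / (2 * π)) ^ m * Real.exp (-v * ξ / 2) ≤
        (m.factorial : ℝ) * (1 / (v * π)) ^ m := by
      rw [hrw2]
      calc (v * ξ / 2) ^ m * (1 / (v * π)) ^ m * Real.exp (-v * ξ / 2)
          ≤ ((m.factorial : ℝ) * Real.exp (v * ξ / 2)) * (1 / (v * π)) ^ m *
              Real.exp (-v * ξ / 2) := by gcongr
        _ = (m.factorial : ℝ) * (1 / (v * π)) ^ m *
              (Real.exp (v * ξ / 2) * Real.exp (-v * ξ / 2)) := by ring
        _ = (m.factorial : ℝ) * (1 / (v * π)) ^ m := by rw [hmul, mul_one]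
    have h3 : (ξ / (2 * π)) ^ a * Real.exp (-v * ξ / 2) ≤
        (ξ / (2 * π)) ^ m * Real.exp (-v * ξ / 2) :=
      mul_le_mul_of_nonneg_right h1 hexp.le
    linarith

/-- A mixing density `p` gives rise to a consistent family of density
generators `f n u = ∫_0^∞ (ξ/(2π))^{n/2} e^{-uξ/2} p ξ dξ`: integrating out one
coordinate takes `f (n+1)` to `f n`. -/
theorem mixing_density_generators_consistent
    (p : ℝ → ℝ) (hp_meas : Measurable p) (hp_nonneg : ∀ ξ, 0 ≤ p ξ)
    (hp_zero : ∀ ξ ≤ (0 : ℝ), p ξ = 0)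
    (hp_int : ∫ ξ in Set.Ioi (0 : ℝ), p ξ = 1)
    (f : ℕ → ℝ → ℝ)
    (hf : ∀ (n : ℕ) (u : ℝ),
      f n u = ∫ ξ in Set.Ioi (0 : ℝ),
        (ξ / (2 * π)) ^ ((n : ℝ) / 2) * Real.exp (-u * ξ / 2) * p ξ) :
    ∀ (n : ℕ) (u : ℝ), 0 ≤ u → (∫ t : ℝ, f (n + 1) (u + t ^ 2)) = f n u := by
  intro n u hu
  have hπ := Real.pi_pos
  -- the exponent for dimension n+1
  set a : ℝ := ((n + 1 : ℕ) : ℝ) / 2 with ha_def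
  have ha0 : 0 ≤ a := by positivity
  -- `p` is integrable on `Ioi 0`
  have hp_int' : IntegrableOn p (Set.Ioi (0 : ℝ)) := by
    by_contra h
    rw [MeasureTheory.integral_undef h] at hp_int
    norm_num at hp_int
  -- nonnegativity of the integrands
  have hnn : ∀ (b w ξ : ℝ), 0 ≤ (ξ / (2 * π)) ^ b * Real.exp (-w * ξ / 2) * p ξ := by
    intro b w ξ
    rcases le_or_gt ξ 0 with h | h
    · simp [hp_zero ξ h]
    · have hb : (0:ℝ) < ξ / (2 * π) := by positivity
      exact mul_nonneg (mul_nonneg (Real.rpow_nonneg hb.le _) (Real.exp_pos _).le)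
        (hp_nonneg ξ)
  -- measurability of the integrands (in ξ, for fixed b, w)
  have hmeasF : ∀ (b w : ℝ),
      Measurable fun ξ : ℝ => (ξ / (2 * π)) ^ b * Real.exp (-w * ξ / 2) * p ξ := by
    intro b w
    refine Measurable.mul (Measurable.mul ?_ ?_) hp_meas
    · exact (measurable_id.div_const (2 * π)).pow measurable_const
    · exact Real.measurable_exp.comp ((measurable_id.const_mul (-w)).div_const 2)
  -- pointwise identification of `f (n+1)` with a lower Lebesgue integral
  have h_pt : ∀ t : ℝ, f (n + 1) (u + t ^ 2) =
      (∫⁻ ξ in Set.Ioi (0:ℝ),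
        ENNReal.ofReal ((ξ / (2 * π)) ^ a * Real.exp (-(u + t ^ 2) * ξ / 2) * p ξ)).toReal := by
    intro t
    rw [hf]
    exact MeasureTheory.integral_eq_lintegral_of_nonneg_ae
      (Filter.Eventually.of_forall fun ξ => hnn a (u + t ^ 2) ξ)
      ((hmeasF a (u + t ^ 2)).aestronglyMeasurable)
  -- the inner lintegral as a function of t
  set X : ℝ → ℝ≥0∞ := fun t => ∫⁻ ξ in Set.Ioi (0:ℝ),
      ENNReal.ofReal ((ξ / (2 * π)) ^ a * Real.exp (-(u + t ^ 2) * ξ / 2) * p ξ) with hX_def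
  have hGmeas : Measurable (fun q : ℝ × ℝ =>
      ENNReal.ofReal ((q.2 / (2 * π)) ^ a * Real.exp (-(u + q.1 ^ 2) * q.2 / 2) * p q.2)) := by
    apply Measurable.ennreal_ofReal
    apply Measurable.mul
    · apply Measurable.mul
      · exact ((measurable_snd.div_const (2 * π)).pow measurable_const)
      · exact (((measurable_const.add (measurable_fst.pow measurable_const)).neg.mul
          measurable_snd).div_const 2).exp
    · exact hp_meas.comp measurable_snd
  have hXmeas : Measurable X := hGmeas.lintegral_prod_right'
  -- finiteness of the inner lintegral for positive shift
  have hfin : ∀ w : ℝ, 0 < w →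
      (∫⁻ ξ in Set.Ioi (0:ℝ),
        ENNReal.ofReal ((ξ / (2 * π)) ^ a * Real.exp (-w * ξ / 2) * p ξ)) < ⊤ := by
    intro w hw
    obtain ⟨C, hC0, hC⟩ := aux_bounded a ha0 hw
    have hle : (∫⁻ ξ in Set.Ioi (0:ℝ),
        ENNReal.ofReal ((ξ / (2 * π)) ^ a * Real.exp (-w * ξ / 2) * p ξ)) ≤
        ∫⁻ ξ in Set.Ioi (0:ℝ), ENNReal.ofReal C * ENNReal.ofReal (p ξ) := by
      apply MeasureTheory.lintegral_mono_ae
      filter_upwards [MeasureTheory.ae_restrict_mem measurableSet_Ioi] with ξ hξ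
      rw [← ENNReal.ofReal_mul hC0]
      exact ENNReal.ofReal_le_ofReal
        (mul_le_mul_of_nonneg_right (hC ξ hξ) (hp_nonneg ξ))
    have heq : ∫⁻ ξ in Set.Ioi (0:ℝ), ENNReal.ofReal C * ENNReal.ofReal (p ξ) =
        ENNReal.ofReal C * ∫⁻ ξ in Set.Ioi (0:ℝ), ENNReal.ofReal (p ξ) :=
      MeasureTheory.lintegral_const_mul _ hp_meas.ennreal_ofReal
    have hpfin : (∫⁻ ξ in Set.Ioi (0:ℝ), ENNReal.ofReal (p ξ)) < ⊤ := by
      rw [← MeasureTheory.ofReal_integral_eq_lintegral_ofReal hp_int'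
        (Filter.Eventually.of_forall fun ξ => hp_nonneg ξ)]
      exact ENNReal.ofReal_lt_top
    calc (∫⁻ ξ in Set.Ioi (0:ℝ),
          ENNReal.ofReal ((ξ / (2 * π)) ^ a * Real.exp (-w * ξ / 2) * p ξ))
        ≤ ENNReal.ofReal C * ∫⁻ ξ in Set.Ioi (0:ℝ), ENNReal.ofReal (p ξ) := heq ▸ hle
      _ < ⊤ := ENNReal.mul_lt_top ENNReal.ofReal_lt_top hpfin
  -- a.e. finiteness of X
  have hfin_ae : ∀ᵐ t : ℝ, X t < ⊤ := by
    have h0 : ∀ᵐ t : ℝ, t ≠ (0:ℝ) := by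
      refine (MeasureTheory.ae_iff.mpr ?_)
      simpa using (MeasureTheory.measure_singleton (0:ℝ))
    filter_upwards [h0] with t ht
    have : 0 < u + t ^ 2 := by
      have := pow_two_pos_of_ne_zero ht  -- 0 < t^2
      linarith
    simpa [hX_def] using hfin (u + t ^ 2) this
  -- inner Gaussian integral, for each ξ > 0
  have hinner : ∀ ξ ∈ Set.Ioi (0:ℝ),
      (∫⁻ t : ℝ,
        ENNReal.ofReal ((ξ / (2 * π)) ^ a * Real.exp (-(u + t ^ 2) * ξ / 2) * p ξ)) =
      ENNReal.ofReal ((ξ / (2 * π)) ^ ((n : ℝ) / 2) * Real.exp (-u * ξ / 2) * p ξ) := by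
    intro ξ hξ
    have hξ0 : (0:ℝ) < ξ := hξ
    have hb : (0:ℝ) < ξ / 2 := by positivity
    have hbase : (0:ℝ) < ξ / (2 * π) := by positivity
    set c : ℝ := (ξ / (2 * π)) ^ a * Real.exp (-u * ξ / 2) * p ξ with hc_def
    have hc0 : 0 ≤ c := hnn a u ξ
    have hFrw : ∀ t : ℝ,
        (ξ / (2 * π)) ^ a * Real.exp (-(u + t ^ 2) * ξ / 2) * p ξ =
        c * Real.exp (-(ξ / 2) * t ^ 2) := by
      intro t
      rw [hc_def, show -(u + t ^ 2) * ξ / 2 = -u * ξ / 2 + -(ξ / 2) * t ^ 2 by ring,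
        Real.exp_add]
      ring
    simp_rw [hFrw, ENNReal.ofReal_mul hc0]
    have hmexp : Measurable fun t : ℝ => ENNReal.ofReal (Real.exp (-(ξ / 2) * t ^ 2)) := by
      apply Measurable.ennreal_ofReal
      exact Real.measurable_exp.comp ((measurable_id.pow_const 2).const_mul (-(ξ / 2)))
    rw [MeasureTheory.lintegral_const_mul _ hmexp]
    rw [← MeasureTheory.ofReal_integral_eq_lintegral_ofReal (integrable_exp_neg_mul_sq hb)
      (Filter.Eventually.of_forall fun t => (Real.exp_pos _).le)]
    rw [integral_gaussian]
    rw [← ENNReal.ofReal_mul hc0]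
    congr 1
    have hsqrt : Real.sqrt (π / (ξ / 2)) = (ξ / (2 * π)) ^ (-(1 / 2 : ℝ)) := by
      rw [Real.sqrt_eq_rpow, Real.rpow_neg hbase.le, ← Real.inv_rpow hbase.le]
      congr 2
      field_simp
    have hpow : (ξ / (2 * π)) ^ a * (ξ / (2 * π)) ^ (-(1 / 2 : ℝ)) =
        (ξ / (2 * π)) ^ ((n : ℝ) / 2) := by
      rw [← Real.rpow_add hbase, ha_def]
      congr 1
      push_cast
      ring
    rw [hsqrt, hc_def,
      show (ξ / (2 * π)) ^ a * Real.exp (-u * ξ / 2) * p ξ * (ξ / (2 * π)) ^ (-(1 / 2 : ℝ)) =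
        ((ξ / (2 * π)) ^ a * (ξ / (2 * π)) ^ (-(1 / 2 : ℝ))) * Real.exp (-u * ξ / 2) * p ξ
        by ring, hpow]
  -- now put everything together
  have hswap : (∫⁻ t : ℝ, X t) =
      ∫⁻ ξ in Set.Ioi (0:ℝ),
        ENNReal.ofReal ((ξ / (2 * π)) ^ ((n : ℝ) / 2) * Real.exp (-u * ξ / 2) * p ξ) := by
    rw [hX_def]
    rw [MeasureTheory.lintegral_lintegral_swap hGmeas.aemeasurable]
    exact MeasureTheory.setLIntegral_congr_fun measurableSet_Ioi
      hinner
  calc (∫ t : ℝ, f (n + 1) (u + t ^ 2)) = ∫ t : ℝ, (X t).toReal := by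
        exact MeasureTheory.integral_congr_ae (Filter.Eventually.of_forall h_pt)
    _ = (∫⁻ t : ℝ, X t).toReal :=
        MeasureTheory.integral_toReal hXmeas.aemeasurable hfin_ae
    _ = (∫⁻ ξ in Set.Ioi (0:ℝ),
          ENNReal.ofReal ((ξ / (2 * π)) ^ ((n : ℝ) / 2) * Real.exp (-u * ξ / 2) * p ξ)).toReal :=
        by rw [hswap]
    _ = f n u := by
        rw [hf]
        exact (MeasureTheory.integral_eq_lintegral_of_nonneg_ae
          (Filter.Eventually.of_forall fun ξ => hnn ((n : ℝ) / 2) u ξ)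
          ((hmeasF ((n : ℝ) / 2) u).aestronglyMeasurable)).symm
end

section
/- (Proposition 1, conditional density.) Let p be a mixing density and let n = n1 + n2, μ = (μ1, μ2), Σ positive definite with the block partition and the quantities u1, u_{2|1}, μ_{2|1}, Σ_{22|1} as defined. Let q(y1, y2) = |Σ|^{-1/2} ∫_0^∞ (ξ/(2π))^{n/2} e^{-ξ(y-μ)ᵀΣ⁻¹(y-μ)/2} p(ξ) dξ be the joint density and q1(y1) = |Σ11|^{-1/2} ∫_0^∞ (ξ/(2π))^{n1/2} e^{-ξ u1/2} p(ξ) dξ the marginal density. Then for every y1 with q1(y1) > 0 and every y2, q(y1,y2)/q1(y1) = c · |Σ_{22|1}|^{-1/2} (2π)^{-n2/2} ∫_0^∞ ξ^{n/2} e^{-(u_{2|1} + u1)ξ/2} p(ξ) dξ, where c⁻¹ = ∫_0^∞ ξ^{n1/2} e^{-ξ u1/2} p(ξ) dξ. -/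
open MeasureTheory Matrix Real

/-- Proposition 1, conditional density: for a consistent elliptical
distribution with mixing density `p`, the conditional density of `y2` given `y1` is
`c · |Σ_{22|1}|^{-1/2} (2π)^{-n2/2} ∫_0^∞ ξ^{n/2} e^{-(u_{2|1}+u1)ξ/2} p(ξ) dξ`, where
`c⁻¹ = ∫_0^∞ ξ^{n1/2} e^{-ξ u1/2} p(ξ) dξ`. -/
theorem elliptical_conditional_density
    (n1 n2 : ℕ) (p : ℝ → ℝ) (hp_meas : Measurable p) (hp_nonneg : ∀ ξ, 0 ≤ p ξ)
    (hp_zero : ∀ ξ ≤ (0 : ℝ), p ξ = 0)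
    (hp_int : ∫ ξ in Set.Ioi (0 : ℝ), p ξ = 1)
    (S11 : Matrix (Fin n1) (Fin n1) ℝ) (S12 : Matrix (Fin n1) (Fin n2) ℝ)
    (S21 : Matrix (Fin n2) (Fin n1) ℝ) (S22 : Matrix (Fin n2) (Fin n2) ℝ)
    (hS21 : S21 = S12ᵀ)
    (S : Matrix (Fin n1 ⊕ Fin n2) (Fin n1 ⊕ Fin n2) ℝ)
    (hS : S = fromBlocks S11 S12 S21 S22) (hSpd : S.PosDef)
    (μ1 : Fin n1 → ℝ) (μ2 : Fin n2 → ℝ)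
    (μ : Fin n1 ⊕ Fin n2 → ℝ) (hμ : μ = Sum.elim μ1 μ2)
    (μ21 : (Fin n1 → ℝ) → Fin n2 → ℝ)
    (hμ21 : ∀ y1, μ21 y1 = μ2 + S21 *ᵥ (S11⁻¹ *ᵥ (y1 - μ1)))
    (S221 : Matrix (Fin n2) (Fin n2) ℝ) (hS221 : S221 = S22 - S21 * S11⁻¹ * S12)
    (u1 : (Fin n1 → ℝ) → ℝ)
    (hu1 : ∀ y1, u1 y1 = (y1 - μ1) ⬝ᵥ (S11⁻¹ *ᵥ (y1 - μ1)))
    (u21 : (Fin n1 → ℝ) → (Fin n2 → ℝ) → ℝ)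
    (hu21 : ∀ y1 y2, u21 y1 y2 = (y2 - μ21 y1) ⬝ᵥ (S221⁻¹ *ᵥ (y2 - μ21 y1)))
    (q : (Fin n1 ⊕ Fin n2 → ℝ) → ℝ)
    (hq : ∀ y, q y = S.det ^ (-(1 : ℝ) / 2) *
      ∫ ξ in Set.Ioi (0 : ℝ),
        (ξ / (2 * π)) ^ (((n1 : ℝ) + (n2 : ℝ)) / 2) *
          Real.exp (-(ξ * ((y - μ) ⬝ᵥ (S⁻¹ *ᵥ (y - μ)))) / 2) * p ξ)
    (q1 : (Fin n1 → ℝ) → ℝ)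
    (hq1 : ∀ y1, q1 y1 = S11.det ^ (-(1 : ℝ) / 2) *
      ∫ ξ in Set.Ioi (0 : ℝ),
        (ξ / (2 * π)) ^ ((n1 : ℝ) / 2) * Real.exp (-(ξ * u1 y1) / 2) * p ξ) :
    ∀ y1 : Fin n1 → ℝ, 0 < q1 y1 → ∀ y2 : Fin n2 → ℝ,
      q (Sum.elim y1 y2) / q1 y1 =
        (∫ ξ in Set.Ioi (0 : ℝ),
            ξ ^ ((n1 : ℝ) / 2) * Real.exp (-(ξ * u1 y1) / 2) * p ξ)⁻¹ *
          (S221.det ^ (-(1 : ℝ) / 2) * (2 * π) ^ (-(n2 : ℝ) / 2) *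
            ∫ ξ in Set.Ioi (0 : ℝ),
              ξ ^ (((n1 : ℝ) + (n2 : ℝ)) / 2) *
                Real.exp (-((u21 y1 y2 + u1 y1) * ξ) / 2) * p ξ) := by
  intro y1 hpos y2
  -- matrix preliminaries
  have hS11pd : S11.PosDef := by
    rw [posDef_iff_dotProduct_mulVec]
    constructor
    · have h := congrArg Matrix.toBlocks₁₁ hSpd.isHermitian.eq
      rw [hS] at h
      simpa [fromBlocks_conjTranspose, fromBlocks_transpose, IsSymm, toBlocks_fromBlocks₁₁] using h
    · intro x hx
      have h := hSpd.dotProduct_mulVec_pos (x := Sum.elim x 0) (by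
        simp only [ne_eq, funext_iff, not_forall] at hx ⊢
        obtain ⟨i, hi⟩ := hx; exact ⟨Sum.inl i, by simpa using hi⟩)
      rw [hS] at h
      simpa [fromBlocks_mulVec, sumElim_dotProduct_sumElim] using h
  haveI : Invertible S11 :=
    S11.invertibleOfIsUnitDet (isUnit_iff_ne_zero.mpr hS11pd.det_pos.ne')
  have h11t : S11ᵀ = S11 := by
    rw [← conjTranspose_eq_transpose_of_trivial]; exact hS11pd.isHermitian.eq
  have hBH : S12ᴴ = S12ᵀ := by rw [← conjTranspose_eq_transpose_of_trivial]
  have h221pd : S221.PosDef := by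
    rw [hS221, hS21]
    rw [posDef_iff_dotProduct_mulVec]
    constructor
    · have hS22t : S22ᵀ = S22 := by
        rw [← conjTranspose_eq_transpose_of_trivial]
        have h := congrArg Matrix.toBlocks₂₂ hSpd.isHermitian.eq
        rw [hS] at h
        simpa [fromBlocks_conjTranspose, fromBlocks_transpose, toBlocks_fromBlocks₂₂] using h
      show (S22 - S12ᵀ * S11⁻¹ * S12)ᴴ = _
      rw [conjTranspose_eq_transpose_of_trivial]
      simp [transpose_sub, transpose_mul, transpose_nonsing_inv, h11t, hS22t,
        Matrix.mul_assoc]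
    · intro y hy
      have key := schur_complement_eq₁₁ (A := S11) S12 S22
        (-(S11⁻¹ * S12) *ᵥ y) y hS11pd.isHermitian
      rw [hBH] at key
      have h := hSpd.dotProduct_mulVec_pos (x := Sum.elim (-(S11⁻¹ * S12) *ᵥ y) y) (by
        simp only [ne_eq, funext_iff, not_forall] at hy ⊢
        obtain ⟨i, hi⟩ := hy; exact ⟨Sum.inr i, by simpa using hi⟩)
      rw [hS, hS21] at h
      rw [dotProduct_mulVec] at h ⊢
      rw [key] at h
      simpa only [neg_mulVec, neg_add_cancel, star_zero, zero_vecMul,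
        zero_dotProduct, zero_add] using h
  haveI : Invertible S221 :=
    S221.invertibleOfIsUnitDet (isUnit_iff_ne_zero.mpr h221pd.det_pos.ne')
  haveI : Invertible S :=
    S.invertibleOfIsUnitDet (isUnit_iff_ne_zero.mpr hSpd.det_pos.ne')
  -- determinant
  have hdet : S.det = S11.det * S221.det := by
    haveI : Invertible (fromBlocks S11 S12 S21 S22) := hS ▸ ‹Invertible S›
    rw [hS, det_fromBlocks₁₁, invOf_eq_nonsing_inv, ← hS221]
  -- quadratic form decomposition
  set a : Fin n1 → ℝ := y1 - μ1 with ha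
  set b : Fin n2 → ℝ := y2 - μ2 with hb
  have hsub : Sum.elim y1 y2 - μ = Sum.elim a b := by
    funext i; rw [hμ]; cases i <;> simp [ha, hb]
  have hquad : (Sum.elim y1 y2 - μ) ⬝ᵥ (S⁻¹ *ᵥ (Sum.elim y1 y2 - μ))
      = u1 y1 + u21 y1 y2 := by
    rw [hsub, hS]
    haveI : Invertible (fromBlocks S11 S12 S21 S22) := hS ▸ ‹Invertible S›
    haveI : Invertible (S22 - S21 * ⅟S11 * S12) := by
      rw [invOf_eq_nonsing_inv, ← hS221]; infer_instance
    have hinv := invOf_fromBlocks₁₁_eq S11 S12 S21 S22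
    simp only [invOf_eq_nonsing_inv, ← hS221] at hinv
    rw [hinv]
    have adj : ∀ {k l : ℕ} (A : Matrix (Fin k) (Fin l) ℝ) (x : Fin l → ℝ) (y : Fin k → ℝ),
        x ⬝ᵥ (Aᵀ *ᵥ y) = (A *ᵥ x) ⬝ᵥ y := by
      intro k l A x y
      rw [dotProduct_mulVec, vecMul_transpose]
    have hm : ∀ z : Fin n2 → ℝ, (S21 *ᵥ (S11⁻¹ *ᵥ a)) ⬝ᵥ z
        = a ⬝ᵥ ((S11⁻¹ * S12) *ᵥ z) := by
      intro z
      rw [mulVec_mulVec, ← adj]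
      congr 1
      rw [transpose_mul, transpose_nonsing_inv, h11t, hS21, transpose_transpose]
    have hμdiff : y2 - μ21 y1 = b - S21 *ᵥ (S11⁻¹ *ᵥ a) := by
      rw [hμ21, hb, ha]; funext i; simp; ring
    rw [hu1, hu21, hμdiff, ← ha]
    simp only [fromBlocks_mulVec, sumElim_dotProduct_sumElim, add_mulVec, neg_mulVec,
      dotProduct_add, dotProduct_neg, dotProduct_sub, sub_dotProduct, ← mulVec_mulVec,
      mulVec_sub, Sum.elim_comp_inl, Sum.elim_comp_inr]
    rw [hm, hm]
    simp only [← mulVec_mulVec]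
    ring
  -- integral manipulation
  have key : ∀ (r u : ℝ),
      (∫ ξ in Set.Ioi (0:ℝ), (ξ/(2*π))^r * Real.exp (-(ξ*u)/2) * p ξ)
        = (2*π)^(-r) * ∫ ξ in Set.Ioi (0:ℝ), ξ^r * Real.exp (-(ξ*u)/2) * p ξ := by
    intro r u
    rw [← MeasureTheory.integral_const_mul]
    apply setIntegral_congr_fun measurableSet_Ioi
    intro ξ hξ
    dsimp only
    have hξ0 : (0:ℝ) < ξ := hξ
    rw [Real.div_rpow hξ0.le (by positivity), Real.rpow_neg (by positivity), div_eq_mul_inv]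
    ring
  set I1 : ℝ := ∫ ξ in Set.Ioi (0:ℝ), ξ^((n1:ℝ)/2) * Real.exp (-(ξ * u1 y1)/2) * p ξ with hI1
  set In : ℝ := ∫ ξ in Set.Ioi (0:ℝ), ξ^(((n1:ℝ)+(n2:ℝ))/2) *
      Real.exp (-((u21 y1 y2 + u1 y1) * ξ)/2) * p ξ with hIn
  have hq1v : q1 y1 = S11.det ^ (-(1:ℝ)/2) * ((2*π)^(-((n1:ℝ)/2)) * I1) := by
    rw [hq1, key]
  have hqv : q (Sum.elim y1 y2) = S.det ^ (-(1:ℝ)/2) *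
      ((2*π)^(-(((n1:ℝ)+(n2:ℝ))/2)) * In) := by
    have hqint : (∫ ξ in Set.Ioi (0:ℝ),
        (ξ/(2*π))^(((n1:ℝ)+(n2:ℝ))/2) *
          Real.exp (-(ξ * ((Sum.elim y1 y2 - μ) ⬝ᵥ (S⁻¹ *ᵥ (Sum.elim y1 y2 - μ))))/2) * p ξ)
        = ∫ ξ in Set.Ioi (0:ℝ), (2*π)^(-(((n1:ℝ)+(n2:ℝ))/2)) *
            (ξ^(((n1:ℝ)+(n2:ℝ))/2) * Real.exp (-((u21 y1 y2 + u1 y1)*ξ)/2) * p ξ) := by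
      apply setIntegral_congr_fun measurableSet_Ioi
      intro ξ hξ
      dsimp only
      have hξ0 : (0:ℝ) < ξ := hξ
      rw [hquad,
      show -(ξ * (u1 y1 + u21 y1 y2))/2 = -((u21 y1 y2 + u1 y1) * ξ)/2 from by ring,
      Real.div_rpow hξ0.le (by positivity), Real.rpow_neg (by positivity), div_eq_mul_inv]
      ring
    rw [hq, hqint, MeasureTheory.integral_const_mul, hIn]
  -- positivity of I1
  have h2pi : (0:ℝ) < 2*π := by positivity
  have hI1pos : 0 < I1 := by
    rw [hq1v] at hpos
    have c1 : (0:ℝ) < S11.det ^ (-(1:ℝ)/2) := Real.rpow_pos_of_pos hS11pd.det_pos _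
    have c2 : (0:ℝ) < (2*π)^(-((n1:ℝ)/2)) := Real.rpow_pos_of_pos h2pi _
    by_contra hcon
    push_neg at hcon
    have h1 : S11.det ^ (-(1:ℝ)/2) * ((2*π)^(-((n1:ℝ)/2)) * I1) ≤ 0 :=
      mul_nonpos_of_nonneg_of_nonpos c1.le (mul_nonpos_of_nonneg_of_nonpos c2.le hcon)
    linarith
  -- final algebra
  rw [hqv, hq1v, hdet,
    Real.mul_rpow hS11pd.det_pos.le h221pd.det_pos.le,
    show (-(((n1:ℝ)+(n2:ℝ))/2)) = (-((n1:ℝ)/2)) + (-((n2:ℝ)/2)) by ring,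
    Real.rpow_add h2pi, show (-(n2:ℝ)/2) = -((n2:ℝ)/2) by ring]
  have c1 : S11.det ^ (-(1:ℝ)/2) ≠ 0 := (Real.rpow_pos_of_pos hS11pd.det_pos _).ne'
  have c2 : (2*π)^(-((n1:ℝ)/2)) ≠ 0 := (Real.rpow_pos_of_pos h2pi _).ne'
  field_simp
  rw [mul_assoc, mul_div_cancel_left₀ _ (Real.rpow_pos_of_pos hS11pd.det_pos _).ne']
end

section
/- With the notation of Proposition 1, the conditional density is itself a consistent elliptical density: for every y1 with u1 = u1(y1), the function y2 ↦ c · |Σ_{22|1}|^{-1/2} (2π)^{-n2/2} ∫_0^∞ ξ^{n/2} e^{-(u_{2|1} + u1)ξ/2} p(ξ) dξ equals |Σ_{22|1}|^{-1/2} ∫_0^∞ (ξ/(2π))^{n2/2} e^{-u_{2|1} ξ/2} p̂(ξ) dξ, where p̂(ξ) = c · ξ^{n1/2} e^{-ξ u1/2} p(ξ) with c⁻¹ = ∫_0^∞ ξ^{n1/2} e^{-ξ u1/2} p(ξ) dξ, and p̂ is again a mixing density (nonnegative, vanishing on (-∞,0], integrating to 1). -/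
open MeasureTheory Matrix Real

/-- the conditional density of Proposition 1 is itself a consistent
elliptical density, with conditional (posterior) mixing density
`p̂(ξ) = c · ξ^{n1/2} e^{-ξ u1/2} p(ξ)`, and `p̂` is again a mixing density. -/
theorem elliptical_conditional_is_elliptical
    (n1 n2 : ℕ) (p : ℝ → ℝ) (hp_meas : Measurable p) (hp_nonneg : ∀ ξ, 0 ≤ p ξ)
    (hp_zero : ∀ ξ ≤ (0 : ℝ), p ξ = 0)
    (hp_int : ∫ ξ in Set.Ioi (0 : ℝ), p ξ = 1)
    (S11 : Matrix (Fin n1) (Fin n1) ℝ) (S12 : Matrix (Fin n1) (Fin n2) ℝ)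
    (S21 : Matrix (Fin n2) (Fin n1) ℝ) (S22 : Matrix (Fin n2) (Fin n2) ℝ)
    (hS21 : S21 = S12ᵀ)
    (S : Matrix (Fin n1 ⊕ Fin n2) (Fin n1 ⊕ Fin n2) ℝ)
    (hS : S = fromBlocks S11 S12 S21 S22) (hSpd : S.PosDef)
    (μ1 : Fin n1 → ℝ) (μ2 : Fin n2 → ℝ)
    (μ21 : (Fin n1 → ℝ) → Fin n2 → ℝ)
    (hμ21 : ∀ y1, μ21 y1 = μ2 + S21 *ᵥ (S11⁻¹ *ᵥ (y1 - μ1)))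
    (S221 : Matrix (Fin n2) (Fin n2) ℝ) (hS221 : S221 = S22 - S21 * S11⁻¹ * S12)
    (u1 : (Fin n1 → ℝ) → ℝ)
    (hu1 : ∀ y1, u1 y1 = (y1 - μ1) ⬝ᵥ (S11⁻¹ *ᵥ (y1 - μ1)))
    (u21 : (Fin n1 → ℝ) → (Fin n2 → ℝ) → ℝ)
    (hu21 : ∀ y1 y2, u21 y1 y2 = (y2 - μ21 y1) ⬝ᵥ (S221⁻¹ *ᵥ (y2 - μ21 y1)))
    (phat : (Fin n1 → ℝ) → ℝ → ℝ)
    (hphat : ∀ y1 ξ, phat y1 ξ =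
      (∫ ζ in Set.Ioi (0 : ℝ),
          ζ ^ ((n1 : ℝ) / 2) * Real.exp (-(ζ * u1 y1) / 2) * p ζ)⁻¹ *
        (ξ ^ ((n1 : ℝ) / 2) * Real.exp (-(ξ * u1 y1) / 2) * p ξ)) :
    ∀ y1 : Fin n1 → ℝ,
      IntegrableOn
        (fun ξ => ξ ^ ((n1 : ℝ) / 2) * Real.exp (-(ξ * u1 y1) / 2) * p ξ)
        (Set.Ioi (0 : ℝ)) →
      0 < (∫ ξ in Set.Ioi (0 : ℝ),
            ξ ^ ((n1 : ℝ) / 2) * Real.exp (-(ξ * u1 y1) / 2) * p ξ) →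
      (∀ y2 : Fin n2 → ℝ,
        (∫ ξ in Set.Ioi (0 : ℝ),
            ξ ^ ((n1 : ℝ) / 2) * Real.exp (-(ξ * u1 y1) / 2) * p ξ)⁻¹ *
          (S221.det ^ (-(1 : ℝ) / 2) * (2 * π) ^ (-(n2 : ℝ) / 2) *
            ∫ ξ in Set.Ioi (0 : ℝ),
              ξ ^ (((n1 : ℝ) + (n2 : ℝ)) / 2) *
                Real.exp (-((u21 y1 y2 + u1 y1) * ξ) / 2) * p ξ) =
        S221.det ^ (-(1 : ℝ) / 2) *
          ∫ ξ in Set.Ioi (0 : ℝ),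
            (ξ / (2 * π)) ^ ((n2 : ℝ) / 2) *
              Real.exp (-(u21 y1 y2 * ξ) / 2) * phat y1 ξ) ∧
      (∀ ξ, 0 ≤ phat y1 ξ) ∧ (∀ ξ ≤ (0 : ℝ), phat y1 ξ = 0) ∧
      (∫ ξ in Set.Ioi (0 : ℝ), phat y1 ξ) = 1 := by

  intro y1 hint hIpos
  set I := ∫ ξ in Set.Ioi (0 : ℝ),
      ξ ^ ((n1 : ℝ) / 2) * Real.exp (-(ξ * u1 y1) / 2) * p ξ with hIdef
  have hIne : I ≠ 0 := ne_of_gt hIpos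
  have h2pi : (0 : ℝ) < 2 * π := by positivity
  refine ⟨?_, ?_, ?_, ?_⟩
  · intro y2
    have key : Set.EqOn
        (fun ξ : ℝ => ξ ^ (((n1 : ℝ) + (n2 : ℝ)) / 2) *
          Real.exp (-((u21 y1 y2 + u1 y1) * ξ) / 2) * p ξ)
        (fun ξ : ℝ => (2 * π) ^ ((n2 : ℝ) / 2) *
          ((ξ / (2 * π)) ^ ((n2 : ℝ) / 2) * Real.exp (-(u21 y1 y2 * ξ) / 2) *
            (ξ ^ ((n1 : ℝ) / 2) * Real.exp (-(ξ * u1 y1) / 2) * p ξ)))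
        (Set.Ioi (0 : ℝ)) := by
      intro ξ hξ
      have hξ0 : (0 : ℝ) < ξ := hξ
      have hC : (2 * π) ^ ((n2 : ℝ) / 2) ≠ 0 := by positivity
      simp only
      rw [Real.div_rpow hξ0.le h2pi.le,
        show ((n1 : ℝ) + (n2 : ℝ)) / 2 = (n1 : ℝ) / 2 + (n2 : ℝ) / 2 by ring,
        Real.rpow_add hξ0,
        show -((u21 y1 y2 + u1 y1) * ξ) / 2
          = -(u21 y1 y2 * ξ) / 2 + -(ξ * u1 y1) / 2 by ring,
        Real.exp_add]
      field_simp
    rw [MeasureTheory.setIntegral_congr_fun measurableSet_Ioi key,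
      MeasureTheory.integral_const_mul]
    have hrhs : ∀ ξ : ℝ,
        (ξ / (2 * π)) ^ ((n2 : ℝ) / 2) * Real.exp (-(u21 y1 y2 * ξ) / 2) * phat y1 ξ
        = I⁻¹ * ((ξ / (2 * π)) ^ ((n2 : ℝ) / 2) * Real.exp (-(u21 y1 y2 * ξ) / 2) *
            (ξ ^ ((n1 : ℝ) / 2) * Real.exp (-(ξ * u1 y1) / 2) * p ξ)) := by
      intro ξ
      rw [hphat, ← hIdef]
      ring
    simp_rw [hrhs]
    rw [MeasureTheory.integral_const_mul]
    have h1 : (2 * π) ^ (-(n2 : ℝ) / 2) * (2 * π) ^ ((n2 : ℝ) / 2) = 1 := by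
      rw [← Real.rpow_add h2pi,
        show -(n2 : ℝ) / 2 + (n2 : ℝ) / 2 = 0 by ring, Real.rpow_zero]
    set J := ∫ ξ in Set.Ioi (0 : ℝ),
        (ξ / (2 * π)) ^ ((n2 : ℝ) / 2) * Real.exp (-(u21 y1 y2 * ξ) / 2) *
          (ξ ^ ((n1 : ℝ) / 2) * Real.exp (-(ξ * u1 y1) / 2) * p ξ)
    linear_combination I⁻¹ * S221.det ^ (-(1 : ℝ) / 2) * J * h1
  · intro ξ
    rw [hphat, ← hIdef]
    rcases le_or_gt ξ 0 with h | h
    · rw [hp_zero ξ h]; simp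
    · have h1 : 0 ≤ I⁻¹ := inv_nonneg.mpr hIpos.le
      have h2 : 0 ≤ ξ ^ ((n1 : ℝ) / 2) := Real.rpow_nonneg h.le _
      exact mul_nonneg h1 (mul_nonneg (mul_nonneg h2 (Real.exp_nonneg _)) (hp_nonneg ξ))
  · intro ξ hξ
    rw [hphat, hp_zero ξ hξ]
    simp
  · have : ∀ ξ : ℝ, phat y1 ξ =
        I⁻¹ * (ξ ^ ((n1 : ℝ) / 2) * Real.exp (-(ξ * u1 y1) / 2) * p ξ) := by
      intro ξ; rw [hphat, ← hIdef]
    simp_rw [this]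
    rw [MeasureTheory.integral_const_mul, ← hIdef, inv_mul_cancel₀ hIne]
end

section
/- Let p be the piecewise constant mixing density determined by M, h_1,…,h_M, Δ, ℓ_0 (so ℓ_k = ℓ_0 + kΔ). Then for every n ∈ ℕ and every u > 0, the consistent elliptical density generator satisfies ∫_0^∞ (ξ/(2π))^{n/2} e^{-uξ/2} p(ξ) dξ = (2 u^{-(n/2+1)}) / (π^{n/2} Δ ∑_{k=1}^M h_k) · ∑_{k=1}^M h_k Γ(n/2 + 1, ℓ_{k-1} u / 2, ℓ_k u / 2). -/
open MeasureTheory Real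

/-- The generalized incomplete gamma function `Γ(s, a, b) = ∫_a^b t^{s-1} e^{-t} dt`. -/
noncomputable def incGamma (s a b : ℝ) : ℝ :=
  ∫ t in a..b, t ^ (s - 1) * Real.exp (-t)

lemma key (s u a b : ℝ) (hu : 0 < u) (ha : 0 < a) (hab : a ≤ b) :
    ∫ ξ in Set.Ioo a b, (ξ / (2 * π)) ^ s * Real.exp (-(u * ξ) / 2)
      = 2 * u ^ (-(s + 1)) / π ^ s * incGamma (s + 1) (a * u / 2) (b * u / 2) := by
  have hc : (0:ℝ) < u / 2 := by linarith
  have h1 : incGamma (s + 1) (a * u / 2) (b * u / 2)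
      = (u / 2) • ∫ ξ in a..b, (ξ * (u / 2)) ^ s * Real.exp (-(ξ * (u / 2))) := by
    have h0 := intervalIntegral.smul_integral_comp_mul_right (a := a) (b := b)
      (fun t => t ^ ((s+1) - 1) * Real.exp (-t)) (u/2)
    rw [incGamma, mul_div_assoc a, mul_div_assoc b, ← h0]
    simp only [add_sub_cancel_right]
  rw [h1, smul_eq_mul]
  rw [← MeasureTheory.integral_Ioc_eq_integral_Ioo,
    ← intervalIntegral.integral_of_le hab]
  rw [← intervalIntegral.integral_const_mul, ← intervalIntegral.integral_const_mul]
  apply intervalIntegral.integral_congr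
  intro ξ hξ
  rw [Set.uIcc_of_le hab] at hξ
  dsimp only
  have hξ0 : 0 < ξ := lt_of_lt_of_le ha hξ.1
  have e1 : -(u * ξ) / 2 = -(ξ * (u / 2)) := by ring
  rw [e1]
  have e2 : (ξ * (u / 2)) ^ s = ξ ^ s * (u / 2) ^ s :=
    Real.mul_rpow hξ0.le hc.le
  have e3 : (ξ / (2 * π)) ^ s = ξ ^ s / (2 * π) ^ s :=
    Real.div_rpow hξ0.le (by positivity : (0:ℝ) ≤ 2 * π) s
  rw [e2, e3]
  have e4 : (2 * π) ^ s = 2 ^ s * π ^ s := Real.mul_rpow (by norm_num) pi_pos.le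
  have e5 : (u / 2) ^ s = u ^ s / 2 ^ s := Real.div_rpow hu.le (by norm_num : (0:ℝ) ≤ 2) s
  have e6 : u ^ (-(s+1)) = (u ^ s * u)⁻¹ := by
    rw [Real.rpow_neg hu.le, Real.rpow_add hu, Real.rpow_one]
  rw [e4, e5, e6]
  have h2 : (0:ℝ) < 2 ^ s := Real.rpow_pos_of_pos (by norm_num) s
  have h3 : (0:ℝ) < π ^ s := Real.rpow_pos_of_pos pi_pos s
  have h4 : (0:ℝ) < u ^ s := Real.rpow_pos_of_pos hu s
  field_simp

/-- the density generator of the consistent elliptical distribution with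
piecewise constant mixing density equals
`(2 u^{-(n/2+1)}) / (π^{n/2} Δ ∑ h_k) · ∑_k h_k Γ(n/2+1, ℓ_{k-1}u/2, ℓ_k u/2)`. -/
theorem piecewise_constant_elliptical_density
    (M : ℕ) (hM : 1 ≤ M) (h : Fin M → ℝ) (hh : ∀ k, 0 < h k)
    (Δ ℓ0 : ℝ) (hΔ : 0 < Δ) (hℓ0 : 0 < ℓ0)
    (p : ℝ → ℝ)
    (hp : ∀ ξ, p ξ = (1 / (Δ * ∑ k, h k)) *
      ∑ k : Fin M, h k *
        Set.indicator (Set.Ioo (ℓ0 + (k : ℕ) * Δ) (ℓ0 + ((k : ℕ) + 1) * Δ))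
          (1 : ℝ → ℝ) ξ)
    (n : ℕ) (u : ℝ) (hu : 0 < u) :
    (∫ ξ in Set.Ioi (0 : ℝ),
        (ξ / (2 * π)) ^ ((n : ℝ) / 2) * Real.exp (-(u * ξ) / 2) * p ξ) =
      2 * u ^ (-((n : ℝ) / 2 + 1)) / (π ^ ((n : ℝ) / 2) * Δ * ∑ k, h k) *
        ∑ k : Fin M, h k *
          incGamma ((n : ℝ) / 2 + 1) ((ℓ0 + (k : ℕ) * Δ) * u / 2)
            ((ℓ0 + ((k : ℕ) + 1) * Δ) * u / 2) := by
  have hS : 0 < ∑ k, h k := Finset.sum_pos (fun k _ => hh k)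
    (Finset.univ_nonempty_iff.2 ⟨⟨0, hM⟩⟩)
  set s : ℝ := (n : ℝ) / 2 with hs
  set f : ℝ → ℝ := fun ξ => (ξ / (2 * π)) ^ s * Real.exp (-(u * ξ) / 2) with hf
  set C : ℝ := 1 / (Δ * ∑ k, h k) with hC
  have ha : ∀ k : Fin M, 0 < ℓ0 + (k:ℕ) * Δ := fun k => by positivity
  have hab : ∀ k : Fin M, ℓ0 + (k:ℕ) * Δ ≤ ℓ0 + ((k:ℕ)+1) * Δ := fun k => by nlinarith
  -- rewrite integrand
  have hrw : ∀ ξ, f ξ * p ξ = ∑ k : Fin M,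
      Set.indicator (Set.Ioo (ℓ0 + (k:ℕ) * Δ) (ℓ0 + ((k:ℕ)+1) * Δ))
        (fun ξ => C * h k * f ξ) ξ := by
    intro ξ
    rw [hp ξ, Finset.mul_sum, Finset.mul_sum]
    refine Finset.sum_congr rfl fun k _ => ?_
    by_cases hξ : ξ ∈ Set.Ioo (ℓ0 + (k:ℕ) * Δ) (ℓ0 + ((k:ℕ)+1) * Δ)
    · simp only [Set.indicator_of_mem hξ, Pi.one_apply]; ring
    · simp only [Set.indicator_of_notMem hξ]; ring
  have hint : ∀ k : Fin M, Integrable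
      (Set.indicator (Set.Ioo (ℓ0 + (k:ℕ) * Δ) (ℓ0 + ((k:ℕ)+1) * Δ))
        (fun ξ => C * h k * f ξ)) (volume.restrict (Set.Ioi 0)) := by
    intro k
    apply Integrable.restrict
    rw [integrable_indicator_iff measurableSet_Ioo]
    apply IntegrableOn.mono_set _ Set.Ioo_subset_Icc_self
    apply ContinuousOn.integrableOn_Icc
    apply ContinuousOn.mul continuousOn_const
    apply ContinuousOn.mul
    · apply ContinuousOn.rpow_const (continuousOn_id.div_const _)
      intro x hx
      left
      have := ha k
      have hx0 : 0 < x := lt_of_lt_of_le this hx.1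
      positivity
    · exact (Real.continuous_exp.comp
        (((continuous_const.mul continuous_id).neg).div_const 2)).continuousOn
  calc (∫ ξ in Set.Ioi (0:ℝ), f ξ * p ξ)
      = ∫ ξ in Set.Ioi (0:ℝ), ∑ k : Fin M,
          Set.indicator (Set.Ioo (ℓ0 + (k:ℕ) * Δ) (ℓ0 + ((k:ℕ)+1) * Δ))
            (fun ξ => C * h k * f ξ) ξ := by
        exact integral_congr_ae (Filter.Eventually.of_forall fun ξ => hrw ξ)
    _ = ∑ k : Fin M, ∫ ξ in Set.Ioi (0:ℝ),
          Set.indicator (Set.Ioo (ℓ0 + (k:ℕ) * Δ) (ℓ0 + ((k:ℕ)+1) * Δ))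
            (fun ξ => C * h k * f ξ) ξ :=
        integral_finset_sum _ (fun k _ => hint k)
    _ = ∑ k : Fin M, C * h k * ∫ ξ in Set.Ioo (ℓ0 + (k:ℕ) * Δ) (ℓ0 + ((k:ℕ)+1) * Δ), f ξ := by
        refine Finset.sum_congr rfl fun k _ => ?_
        rw [setIntegral_indicator measurableSet_Ioo]
        have : Set.Ioi (0:ℝ) ∩ Set.Ioo (ℓ0 + (k:ℕ) * Δ) (ℓ0 + ((k:ℕ)+1) * Δ)
            = Set.Ioo (ℓ0 + (k:ℕ) * Δ) (ℓ0 + ((k:ℕ)+1) * Δ) := by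
          apply Set.inter_eq_right.2
          intro x hx
          exact lt_trans (ha k) hx.1
        rw [this, MeasureTheory.integral_const_mul]
    _ = ∑ k : Fin M, C * h k * (2 * u ^ (-(s + 1)) / π ^ s *
          incGamma (s + 1) ((ℓ0 + (k:ℕ) * Δ) * u / 2) ((ℓ0 + ((k:ℕ)+1) * Δ) * u / 2)) := by
        refine Finset.sum_congr rfl fun k _ => ?_
        rw [key s u _ _ hu (ha k) (hab k)]
    _ = 2 * u ^ (-(s + 1)) / (π ^ s * Δ * ∑ k, h k) *
        ∑ k : Fin M, h k *
          incGamma (s + 1) ((ℓ0 + (k:ℕ) * Δ) * u / 2) ((ℓ0 + ((k:ℕ)+1) * Δ) * u / 2) := by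
        rw [Finset.mul_sum]
        refine Finset.sum_congr rfl fun k _ => ?_
        have h3 : (0:ℝ) < π ^ s := Real.rpow_pos_of_pos pi_pos s
        rw [hC]
        field_simp
end

section
/- Let p be the piecewise constant mixing density determined by M, h_1,…,h_M, Δ, ℓ_0 (so ℓ_k = ℓ_0 + kΔ). Then for every n1 ∈ ℕ with n1 ≥ 1 and every u1 > 0, the posterior inverse moment of the mixing variable satisfies (∫_0^∞ ξ^{n1/2 - 1} e^{-ξ u1/2} p(ξ) dξ) / (∫_0^∞ ξ^{n1/2} e^{-ξ u1/2} p(ξ) dξ) = (u1/2) · [∑_{k=1}^M h_k Γ(n1/2, ℓ_{k-1} u1/2, ℓ_k u1/2)] / [∑_{k=1}^M h_k Γ(n1/2 + 1, ℓ_{k-1} u1/2, ℓ_k u1/2)]; this is the scale factor E_{ξ|y1}[ξ⁻¹] multiplying Σ_{22|1} in the conditional covariance of the elliptical process with piecewise constant mixing distribution. -/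
open MeasureTheory Real

lemma interval_key (α a b u : ℝ) (ha : 0 < a) (hab : a ≤ b) (hu : 0 < u) :
    (∫ ξ in a..b, ξ ^ α * Real.exp (-(ξ * u) / 2)) =
      (u / 2) ^ (-(α + 1)) * incGamma (α + 1) (a * (u / 2)) (b * (u / 2)) := by
  have hc : (0 : ℝ) < u / 2 := by linarith
  have hcong : (∫ ξ in a..b, ξ ^ α * Real.exp (-(ξ * u) / 2)) =
      ∫ ξ in a..b, (u / 2) ^ (-α) *
        ((ξ * (u / 2)) ^ α * Real.exp (-(ξ * (u / 2)))) := by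
    apply intervalIntegral.integral_congr
    intro ξ hξ
    rw [Set.uIcc_of_le hab] at hξ
    have hξ0 : 0 ≤ ξ := le_trans ha.le hξ.1
    dsimp only
    rw [Real.mul_rpow hξ0 hc.le, Real.rpow_neg hc.le]
    have harg : -(ξ * u) / 2 = -(ξ * (u / 2)) := by ring
    rw [harg]
    have hne : (u / 2) ^ α ≠ 0 := ne_of_gt (Real.rpow_pos_of_pos hc α)
    field_simp
  rw [hcong, intervalIntegral.integral_const_mul,
    intervalIntegral.integral_comp_mul_right
      (fun t => t ^ α * Real.exp (-t)) (ne_of_gt hc)]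
  rw [smul_eq_mul, incGamma]
  have h1 : α + 1 - 1 = α := by ring
  rw [h1, ← mul_assoc]
  congr 1
  rw [Real.rpow_neg hc.le, Real.rpow_neg hc.le, Real.rpow_add hc,
    Real.rpow_one, mul_inv]

/-- for the piecewise constant mixing density, the posterior inverse
moment `E_{ξ|y1}[ξ⁻¹]` of the mixing variable equals
`(u1/2) · [∑_k h_k Γ(n1/2, ℓ_{k-1}u1/2, ℓ_k u1/2)]
        / [∑_k h_k Γ(n1/2+1, ℓ_{k-1}u1/2, ℓ_k u1/2)]`. -/
theorem piecewise_constant_posterior_inverse_moment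
    (M : ℕ) (hM : 1 ≤ M) (h : Fin M → ℝ) (hh : ∀ k, 0 < h k)
    (Δ ℓ0 : ℝ) (hΔ : 0 < Δ) (hℓ0 : 0 < ℓ0)
    (p : ℝ → ℝ)
    (hp : ∀ ξ, p ξ = (1 / (Δ * ∑ k, h k)) *
      ∑ k : Fin M, h k *
        Set.indicator (Set.Ioo (ℓ0 + (k : ℕ) * Δ) (ℓ0 + ((k : ℕ) + 1) * Δ))
          (1 : ℝ → ℝ) ξ)
    (n1 : ℕ) (hn1 : 1 ≤ n1) (u1 : ℝ) (hu1 : 0 < u1) :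
    (∫ ξ in Set.Ioi (0 : ℝ),
        ξ ^ ((n1 : ℝ) / 2 - 1) * Real.exp (-(ξ * u1) / 2) * p ξ) /
      (∫ ξ in Set.Ioi (0 : ℝ),
        ξ ^ ((n1 : ℝ) / 2) * Real.exp (-(ξ * u1) / 2) * p ξ) =
      (u1 / 2) *
        ((∑ k : Fin M, h k *
            incGamma ((n1 : ℝ) / 2) ((ℓ0 + (k : ℕ) * Δ) * u1 / 2)
              ((ℓ0 + ((k : ℕ) + 1) * Δ) * u1 / 2)) /
          (∑ k : Fin M, h k *
            incGamma ((n1 : ℝ) / 2 + 1) ((ℓ0 + (k : ℕ) * Δ) * u1 / 2)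
              ((ℓ0 + ((k : ℕ) + 1) * Δ) * u1 / 2))) := by
  have hc : (0 : ℝ) < u1 / 2 := by linarith
  set a : Fin M → ℝ := fun k => ℓ0 + (k : ℕ) * Δ with ha_def
  set b : Fin M → ℝ := fun k => ℓ0 + ((k : ℕ) + 1) * Δ with hb_def
  have hak : ∀ k, 0 < a k := fun k => by
    have : (0:ℝ) ≤ (k : ℕ) * Δ := by positivity
    simp only [ha_def]; linarith
  have hab : ∀ k, a k < b k := fun k => by
    simp only [ha_def, hb_def]; nlinarith
  have hsumh : (0 : ℝ) < ∑ k, h k :=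
    Finset.sum_pos (fun k _ => hh k) (by
      simpa using Finset.univ_nonempty_iff.mpr (Fin.pos_iff_nonempty.mp hM))
  set c0 : ℝ := 1 / (Δ * ∑ k, h k) with hc0
  have hc0pos : 0 < c0 := by positivity
  -- main integral computation
  have main : ∀ α : ℝ, (∫ ξ in Set.Ioi (0 : ℝ),
      ξ ^ α * Real.exp (-(ξ * u1) / 2) * p ξ) =
      c0 * ((u1 / 2) ^ (-(α + 1)) *
        ∑ k : Fin M, h k * incGamma (α + 1) (a k * (u1 / 2)) (b k * (u1 / 2))) := by
    intro α
    set F : ℝ → ℝ := fun ξ => ξ ^ α * Real.exp (-(ξ * u1) / 2) with hF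
    have hFcont : ∀ k : Fin M, ContinuousOn F (Set.Icc (a k) (b k)) := by
      intro k
      apply ContinuousOn.mul
      · apply ContinuousOn.rpow_const continuousOn_id
        intro x hx
        exact Or.inl (ne_of_gt (lt_of_lt_of_le (hak k) hx.1))
      · exact (Real.continuous_exp.comp (by continuity)).continuousOn
    have hint : ∀ k : Fin M,
        Integrable (Set.indicator (Set.Ioo (a k) (b k)) (fun ξ => h k * F ξ))
          (volume.restrict (Set.Ioi (0:ℝ))) := by
      intro k
      rw [integrable_indicator_iff measurableSet_Ioo]
      apply IntegrableOn.restrict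
      exact (IntegrableOn.mono_set ((hFcont k).integrableOn_Icc)
        Set.Ioo_subset_Icc_self).const_mul _
    have hcong : ∀ ξ ∈ Set.Ioi (0:ℝ), F ξ * p ξ =
        c0 * ∑ k : Fin M, Set.indicator (Set.Ioo (a k) (b k)) (fun ξ => h k * F ξ) ξ := by
      intro ξ _
      rw [hp ξ, mul_comm (F ξ), mul_assoc, Finset.sum_mul]
      congr 1
      apply Finset.sum_congr rfl
      intro k _
      by_cases hm : ξ ∈ Set.Ioo (a k) (b k) <;>
        simp [Set.indicator, ha_def, hb_def, hm, mul_comm, mul_assoc]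
    calc (∫ ξ in Set.Ioi (0 : ℝ), F ξ * p ξ)
        = ∫ ξ in Set.Ioi (0:ℝ), c0 * ∑ k : Fin M,
            Set.indicator (Set.Ioo (a k) (b k)) (fun ξ => h k * F ξ) ξ :=
          setIntegral_congr_fun measurableSet_Ioi hcong
      _ = c0 * ∑ k : Fin M, ∫ ξ in Set.Ioi (0:ℝ),
            Set.indicator (Set.Ioo (a k) (b k)) (fun ξ => h k * F ξ) ξ := by
          rw [integral_const_mul]
          congr 1
          exact integral_finset_sum Finset.univ (fun k _ => hint k)
      _ = c0 * ∑ k : Fin M, h k * ∫ ξ in (a k)..(b k), F ξ := by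
          congr 1
          apply Finset.sum_congr rfl
          intro k _
          rw [integral_indicator measurableSet_Ioo,
            Measure.restrict_restrict measurableSet_Ioo]
          have hss : Set.Ioo (a k) (b k) ∩ Set.Ioi (0:ℝ) = Set.Ioo (a k) (b k) := by
            apply Set.inter_eq_left.mpr
            intro x hx
            exact lt_trans (hak k) hx.1
          rw [hss, intervalIntegral.integral_of_le (hab k).le,
            integral_Ioc_eq_integral_Ioo, integral_const_mul]
      _ = c0 * ((u1 / 2) ^ (-(α + 1)) *
            ∑ k : Fin M, h k * incGamma (α + 1) (a k * (u1 / 2)) (b k * (u1 / 2))) := by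
          congr 1
          rw [Finset.mul_sum]
          apply Finset.sum_congr rfl
          intro k _
          rw [interval_key α (a k) (b k) u1 (hak k) (hab k).le hu1]
          ring
  -- positivity of the denominator gamma sum
  have hG : ∀ (s : ℝ), 0 < s → ∀ k : Fin M,
      0 < incGamma s (a k * (u1 / 2)) (b k * (u1 / 2)) := by
    intro s hs k
    have h1 : 0 < a k * (u1 / 2) := mul_pos (hak k) hc
    have h2 : a k * (u1 / 2) < b k * (u1 / 2) := by
      exact mul_lt_mul_of_pos_right (hab k) hc
    apply intervalIntegral.intervalIntegral_pos_of_pos_on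
    · apply ContinuousOn.intervalIntegrable
      rw [Set.uIcc_of_le h2.le]
      apply ContinuousOn.mul
      · apply ContinuousOn.rpow_const continuousOn_id
        intro x hx
        exact Or.inl (ne_of_gt (lt_of_lt_of_le h1 hx.1))
      · exact (Real.continuous_exp.comp continuous_neg).continuousOn
    · intro x hx
      have hx0 : 0 < x := lt_trans h1 hx.1
      positivity
    · exact h2
  set s : ℝ := (n1 : ℝ) / 2 with hs_def
  have hspos : 0 < s := by
    have : (1:ℝ) ≤ (n1:ℝ) := by exact_mod_cast hn1
    simp only [hs_def]; linarith
  have hS2 : 0 < ∑ k : Fin M, h k * incGamma (s + 1) (a k * (u1 / 2)) (b k * (u1 / 2)) :=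
    Finset.sum_pos (fun k _ => mul_pos (hh k) (hG (s+1) (by linarith) k))
      (Finset.univ_nonempty_iff.mpr (Fin.pos_iff_nonempty.mp hM))
  have key1 : s - 1 + 1 = s := by ring
  have e1 : (∫ ξ in Set.Ioi (0 : ℝ), ξ ^ (s - 1) * Real.exp (-(ξ * u1) / 2) * p ξ) =
      c0 * ((u1 / 2) ^ (-s) *
        ∑ k : Fin M, h k * incGamma s (a k * (u1 / 2)) (b k * (u1 / 2))) := by
    rw [main (s - 1), key1]
  have e2 : (∫ ξ in Set.Ioi (0 : ℝ), ξ ^ s * Real.exp (-(ξ * u1) / 2) * p ξ) =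
      c0 * ((u1 / 2) ^ (-(s + 1)) *
        ∑ k : Fin M, h k * incGamma (s + 1) (a k * (u1 / 2)) (b k * (u1 / 2))) := by
    rw [main s]
  have hmd : ∀ k : Fin M, a k * (u1 / 2) = a k * u1 / 2 := fun k => by ring
  have hmd' : ∀ k : Fin M, b k * (u1 / 2) = b k * u1 / 2 := fun k => by ring
  rw [e1, e2]
  have hrpow : (u1 / 2) ^ (-s) = (u1 / 2) * (u1 / 2) ^ (-(s + 1)) := by
    have h1 : (u1/2) ^ ((1:ℝ) + -(s+1)) = (u1/2) ^ (1:ℝ) * (u1/2) ^ (-(s+1)) :=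
      Real.rpow_add hc _ _
    rw [Real.rpow_one] at h1
    rw [show -s = (1:ℝ) + -(s+1) by ring, h1]
  have hrp2 : (u1 / 2) ^ (-(s + 1)) ≠ 0 := ne_of_gt (Real.rpow_pos_of_pos hc _)
  have hGeq : ∀ k : Fin M,
      incGamma s (a k * (u1/2)) (b k * (u1/2)) =
        incGamma s ((ℓ0 + (k:ℕ) * Δ) * u1 / 2) ((ℓ0 + ((k:ℕ) + 1) * Δ) * u1 / 2) := by
    intro k; rw [hmd k, hmd' k]
  have hGeq' : ∀ k : Fin M,
      incGamma (s + 1) (a k * (u1/2)) (b k * (u1/2)) =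
        incGamma (s + 1) ((ℓ0 + (k:ℕ) * Δ) * u1 / 2) ((ℓ0 + ((k:ℕ) + 1) * Δ) * u1 / 2) := by
    intro k; rw [hmd k, hmd' k]
  rw [show (∑ k : Fin M, h k * incGamma s ((ℓ0 + (k:ℕ) * Δ) * u1 / 2)
        ((ℓ0 + ((k:ℕ) + 1) * Δ) * u1 / 2)) =
      ∑ k : Fin M, h k * incGamma s (a k * (u1/2)) (b k * (u1/2)) from
      Finset.sum_congr rfl (fun k _ => by rw [hGeq k]),
    show (∑ k : Fin M, h k * incGamma (s + 1) ((ℓ0 + (k:ℕ) * Δ) * u1 / 2)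
        ((ℓ0 + ((k:ℕ) + 1) * Δ) * u1 / 2)) =
      ∑ k : Fin M, h k * incGamma (s + 1) (a k * (u1/2)) (b k * (u1/2)) from
      Finset.sum_congr rfl (fun k _ => by rw [hGeq' k])]
  rw [hrpow]
  rw [mul_div_mul_left _ _ (ne_of_gt hc0pos), mul_assoc, mul_div_assoc,
    mul_div_mul_left _ _ hrp2]
end

section
/- Fix s > 0 and 0 < a < b, and define Ψ(u) = e^{u/2} (u/2)^{-s} Γ(s, a u / 2, b u / 2) for u > 0, where Γ(s,α,β) = ∫_α^β t^{s-1} e^{-t} dt. Then Ψ is differentiable on (0,∞) with derivative Ψ'(u) = (Ψ(u)/2)(1 - 2s/u) + (b^s e^{(u/2)(1-b)} - a^s e^{(u/2)(1-a)}) / u. -/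
open MeasureTheory Real

/-- the rescaled incomplete gamma term
`Ψ(u) = e^{u/2} (u/2)^{-s} Γ(s, au/2, bu/2)` is differentiable on `(0,∞)` with
`Ψ'(u) = (Ψ(u)/2)(1 - 2s/u) + (b^s e^{(u/2)(1-b)} - a^s e^{(u/2)(1-a)})/u`. -/
theorem rescaled_incGamma_hasDerivAt
    (s a b : ℝ) (hs : 0 < s) (ha : 0 < a) (hab : a < b)
    (Ψ : ℝ → ℝ)
    (hΨ : ∀ u, Ψ u = Real.exp (u / 2) * (u / 2) ^ (-s) *
      incGamma s (a * u / 2) (b * u / 2)) :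
    ∀ u : ℝ, 0 < u →
      HasDerivAt Ψ
        (Ψ u / 2 * (1 - 2 * s / u) +
          (b ^ s * Real.exp (u / 2 * (1 - b)) -
            a ^ s * Real.exp (u / 2 * (1 - a))) / u) u := by
  intro u hu
  have hb : 0 < b := ha.trans hab
  have hu2 : (0:ℝ) < u / 2 := by positivity
  set f : ℝ → ℝ := fun t => t ^ (s - 1) * Real.exp (-t) with hfdef
  have hmeas : Measurable f := by fun_prop
  have hcont : ∀ x : ℝ, 0 < x → ContinuousAt f x := fun x hx =>
    (Real.continuousAt_rpow_const x _ (Or.inl hx.ne')).mul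
      ((Real.continuous_exp.comp continuous_neg).continuousAt)
  have hint : ∀ x y : ℝ, 0 < x → 0 < y → IntervalIntegrable f volume x y := by
    intro x y hx hy
    apply ContinuousOn.intervalIntegrable
    intro t ht
    have ht0 : 0 < t := lt_of_lt_of_le (lt_min hx hy) ht.1
    exact (hcont t ht0).continuousWithinAt
  set c : ℝ := a * u / 4 with hc
  have hc0 : 0 < c := by positivity
  set G : ℝ → ℝ := fun x => ∫ t in c..x, f t with hGdef
  have hGderiv : ∀ x : ℝ, 0 < x → HasDerivAt G (f x) x := fun x hx =>
    intervalIntegral.integral_hasDerivAt_right (hint c x hc0 hx)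
      hmeas.stronglyMeasurable.stronglyMeasurableAtFilter (hcont x hx)
  -- Ψ agrees near u with the explicit function
  have hEq : ∀ v : ℝ, 0 < v →
      Ψ v = Real.exp (v / 2) * (v / 2) ^ (-s) * (G (b * v / 2) - G (a * v / 2)) := by
    intro v hv
    rw [hΨ v]
    congr 1
    rw [hGdef]
    simp only
    rw [intervalIntegral.integral_interval_sub_left (hint c _ hc0 (by positivity))
      (hint c _ hc0 (by positivity))]
    rfl
  -- derivative pieces
  have hlin : ∀ r : ℝ, HasDerivAt (fun v : ℝ => r * v / 2) (r / 2) u := by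
    intro r
    have := ((hasDerivAt_id u).const_mul r).div_const 2
    simpa using this
  have hG1 : HasDerivAt (fun v => G (b * v / 2)) (f (b * u / 2) * (b / 2)) u :=
    (hGderiv _ (by positivity)).comp u (hlin b)
  have hG2 : HasDerivAt (fun v => G (a * v / 2)) (f (a * u / 2) * (a / 2)) u :=
    (hGderiv _ (by positivity)).comp u (hlin a)
  have hE : HasDerivAt (fun v : ℝ => Real.exp (v / 2)) (Real.exp (u / 2) * (1 / 2)) u :=
    (by simpa using (hasDerivAt_id u).div_const 2 : HasDerivAt (fun v : ℝ => v / 2) (1 / 2) u).exp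
  have hP : HasDerivAt (fun v : ℝ => (v / 2) ^ (-s))
      ((-s) * (u / 2) ^ (-s - 1) * (1 / 2)) u := by
    have h1 : HasDerivAt (fun x : ℝ => x ^ (-s)) ((-s) * (u / 2) ^ (-s - 1)) (u / 2) :=
      Real.hasDerivAt_rpow_const (Or.inl hu2.ne')
    have h2 : HasDerivAt (fun v : ℝ => v / 2) (1 / 2) u := by
      simpa using (hasDerivAt_id u).div_const 2
    exact h1.comp u h2
  have H := ((hE.mul hP).mul (hG1.sub hG2))
  have hfinal : HasDerivAt (fun v => Real.exp (v / 2) * (v / 2) ^ (-s) *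
      (G (b * v / 2) - G (a * v / 2)))
      ((Real.exp (u / 2) * (1 / 2) * (u / 2) ^ (-s) +
        Real.exp (u / 2) * ((-s) * (u / 2) ^ (-s - 1) * (1 / 2))) *
        (G (b * u / 2) - G (a * u / 2)) +
       Real.exp (u / 2) * (u / 2) ^ (-s) *
        (f (b * u / 2) * (b / 2) - f (a * u / 2) * (a / 2))) u := H
  have hΨderiv : HasDerivAt Ψ
      ((Real.exp (u / 2) * (1 / 2) * (u / 2) ^ (-s) +
        Real.exp (u / 2) * ((-s) * (u / 2) ^ (-s - 1) * (1 / 2))) *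
        (G (b * u / 2) - G (a * u / 2)) +
       Real.exp (u / 2) * (u / 2) ^ (-s) *
        (f (b * u / 2) * (b / 2) - f (a * u / 2) * (a / 2))) u := by
    apply hfinal.congr_of_eventuallyEq
    filter_upwards [eventually_gt_nhds hu] with v hv
    exact (hEq v hv)
  convert hΨderiv using 1
  -- now the algebraic identity
  have key : ∀ x : ℝ, 0 < x →
      Real.exp (u / 2) * (u / 2) ^ (-s) * (f (x * u / 2) * (x / 2)) =
        x ^ s * Real.exp (u / 2 * (1 - x)) / u := by
    intro x hx
    have h1 : x * u / 2 = x * (u / 2) := by ring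
    simp only [hfdef, h1]
    rw [Real.mul_rpow hx.le hu2.le, Real.rpow_sub_one hx.ne',
      Real.rpow_sub_one hu2.ne', Real.rpow_neg hu2.le]
    have hux : u / 2 * (1 - x) = u / 2 + -(x * (u / 2)) := by ring
    rw [hux, Real.exp_add]
    have hus : ((u / 2 : ℝ) ^ s) ≠ 0 := (Real.rpow_pos_of_pos hu2 s).ne'
    field_simp
  have hpow : (u / 2 : ℝ) ^ (-s - 1) = (u / 2) ^ (-s) / (u / 2) := by
    rw [show -s - 1 = -s - 1 from rfl, Real.rpow_sub_one hu2.ne']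
  have expand : Real.exp (u / 2) * (u / 2) ^ (-s) *
      (f (b * u / 2) * (b / 2) - f (a * u / 2) * (a / 2)) =
      (b ^ s * Real.exp (u / 2 * (1 - b)) - a ^ s * Real.exp (u / 2 * (1 - a))) / u := by
    rw [mul_sub, key b hb, key a ha]; ring
  rw [hEq u hu, hpow, expand]
  field_simp
  ring
end
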